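/- Theorem 3.1 (Hamiltonian form of the system of two (2+1) nonlinear analogues of mKdV, first Hamilton equation in weak form): let u₁, u₂ : ℝ × ℝ² → ℝ, (t,x,y) ↦ u_i(t,x,y), be smooth and compactly supported in (x,y) for every t; define the pseudopotentials by (3.4): v₁ = 3∂_x^{-1}(∂_y(u_{1,y}·u₂)), w₁ = 3∂_y^{-1}(∂_x(u_{1,x}·u₂)), v₂ = 3∂_x^{-1}(∂_y(u₁·u_{2,y})), w₂ = 3∂_y^{-1}(∂_x(u₁·u_{2,x})), v = 3∂_x^{-1}(∂_y(u₁·u₂)), w = 3∂_y^{-1}(∂_x(u₁·u₂)); and suppose ∂u₁/∂t = (∂³_x + ∂³_y)u₁ − v·∂_y u₁ − w·∂_x u₁ − (v₁+w₁)u₁ holds on ℝ × ℝ². Then for every t ∈ ℝ and every smooth compactly supported h : ℝ² → ℝ, the derivative at ε = 0 of the real-variable function ε ↦ H(u₁(t,·), u₂(t,·) + εh) equals −∬_{ℝ²} (∂u₁/∂t)(t,x,y)·h(x,y) dx dy; that is, ∂u₁/∂t = −δH/δu₂. -/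

import Mathlib

open MeasureTheory

/-- The antiderivative operator `(∂⁻¹f)(x) = (1/2)[∫_{-∞}^x f − ∫_x^{+∞} f]`. -/
noncomputable def pinv (f : ℝ → ℝ) (x : ℝ) : ℝ :=
  (1 / 2) * ((∫ s in Set.Iio x, f s) - ∫ s in Set.Ioi x, f s)

/-- `∂_x^{-1}` : the antiderivative operator in the first variable. -/
noncomputable def pinvX (g : ℝ × ℝ → ℝ) : ℝ × ℝ → ℝ :=
  fun p => pinv (fun s => g (s, p.2)) p.1

/-- `∂_y^{-1}` : the antiderivative operator in the second variable. -/
noncomputable def pinvY (g : ℝ × ℝ → ℝ) : ℝ × ℝ → ℝ :=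
  fun p => pinv (fun s => g (p.1, s)) p.2

/-- `∂_x` : partial derivative in the first variable. -/
noncomputable def dX (g : ℝ × ℝ → ℝ) : ℝ × ℝ → ℝ :=
  fun p => deriv (fun x => g (x, p.2)) p.1

/-- `∂_y` : partial derivative in the second variable. -/
noncomputable def dY (g : ℝ × ℝ → ℝ) : ℝ × ℝ → ℝ :=
  fun p => deriv (fun y => g (p.1, y)) p.2

/-- `H₁(u₁,u₂) = ∬ (u_{1,xx}·u_{2,x} + u_{1,yy}·u_{2,y})`. -/
noncomputable def H₁ (u₁ u₂ : ℝ × ℝ → ℝ) : ℝ :=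
  ∫ p : ℝ × ℝ, (dX (dX u₁) p * dX u₂ p + dY (dY u₁) p * dY u₂ p)

/-- `H₂(u₁,u₂) = 3∬ u_{1,y}·u₂·∂_x^{-1}(u₁·u_{2,y})`. -/
noncomputable def H₂ (u₁ u₂ : ℝ × ℝ → ℝ) : ℝ :=
  3 * ∫ p : ℝ × ℝ, dY u₁ p * u₂ p * pinvX (fun q => u₁ q * dY u₂ q) p

/-- `H₃(u₁,u₂) = 3∬ u_{1,x}·u₂·∂_y^{-1}(u₁·u_{2,x})`. -/
noncomputable def H₃ (u₁ u₂ : ℝ × ℝ → ℝ) : ℝ :=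
  3 * ∫ p : ℝ × ℝ, dX u₁ p * u₂ p * pinvY (fun q => u₁ q * dX u₂ q) p

/-- The Hamilton function `H = H₁ + H₂ + H₃` of (3.6). -/
noncomputable def Ham (u₁ u₂ : ℝ × ℝ → ℝ) : ℝ :=
  H₁ u₁ u₂ + H₂ u₁ u₂ + H₃ u₁ u₂

open Set Filter Topology

section Auxiliary
section OneD
variable {f g : ℝ → ℝ} {C : ℝ}

lemma integral_Iio_eq_intervalIntegral (hf : Continuous f) (hfc : HasCompactSupport f)
    (hC : ∀ s, s ∉ Set.Icc (-C) C → f s = 0) (x : ℝ) :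
    ∫ s in Set.Iio x, f s = ∫ s in (-C)..x, f s := by
  have hint : Integrable f := hf.integrable_of_hasCompactSupport hfc
  have h0 : ∫ s in Set.Iic (-C), f s = 0 := by
    rw [← setIntegral_congr_set Iio_ae_eq_Iic]
    apply setIntegral_eq_zero_of_forall_eq_zero
    intro s hs
    exact hC s (by simp only [Set.mem_Icc, not_and_or, not_le]; left; exact hs)
  have : ∫ s in Set.Iio x, f s = ∫ s in Set.Iic x, f s :=
    setIntegral_congr_set Iio_ae_eq_Iic
  rw [this, ← intervalIntegral.integral_Iic_sub_Iic hint.integrableOn hint.integrableOn, h0,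
    sub_zero]

lemma pinv_eq_formula (hf : Continuous f) (hfc : HasCompactSupport f)
    (hC : ∀ s, s ∉ Set.Icc (-C) C → f s = 0) (x : ℝ) :
    pinv f x = (∫ s in (-C)..x, f s) - (1/2) * ∫ s in (-C)..C, f s := by
  have hint : Integrable f := hf.integrable_of_hasCompactSupport hfc
  have hT : ∫ s, f s = ∫ s in (-C)..C, f s := by
    rw [← intervalIntegral.integral_Iic_add_Ioi (b := C) hint.integrableOn hint.integrableOn]
    have h1 : ∫ s in Set.Ioi C, f s = 0 := by
      apply setIntegral_eq_zero_of_forall_eq_zero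
      intro s hs
      exact hC s (by simp only [Set.mem_Icc, not_and_or, not_le]; right; exact hs)
    have h2 : ∫ s in Set.Iic C, f s = ∫ s in (-C)..C, f s := by
      rw [← setIntegral_congr_set Iio_ae_eq_Iic]
      exact integral_Iio_eq_intervalIntegral hf hfc hC C
    rw [h1, add_zero, h2]
  have hsplit : (∫ s in Set.Iio x, f s) + ∫ s in Set.Ioi x, f s = ∫ s, f s := by
    rw [setIntegral_congr_set Iio_ae_eq_Iic]
    exact intervalIntegral.integral_Iic_add_Ioi hint.integrableOn hint.integrableOn
  have hA : ∫ s in Set.Iio x, f s = ∫ s in (-C)..x, f s :=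
    integral_Iio_eq_intervalIntegral hf hfc hC x
  have hB : ∫ s in Set.Ioi x, f s = (∫ s in (-C)..C, f s) - ∫ s in (-C)..x, f s := by
    rw [← hT, ← hsplit, hA]; ring
  rw [pinv, hB, hA]; ring

end OneD
section OneD
variable {f g F G F' G' : ℝ → ℝ} {C : ℝ}

lemma exists_supp_bound (hfc : HasCompactSupport f) :
    ∃ C : ℝ, 0 < C ∧ ∀ s, s ∉ Set.Icc (-C) C → f s = 0 := by
  obtain ⟨r, hr, hsub⟩ := hfc.isBounded.subset_closedBall_lt 0 0
  refine ⟨r, hr, fun s hs => image_eq_zero_of_notMem_tsupport (fun hmem => hs ?_)⟩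
  have := hsub hmem
  rw [Real.closedBall_eq_Icc, zero_sub, zero_add] at this
  exact this

lemma supp_bound_mono (hC : ∀ s, s ∉ Set.Icc (-C) C → f s = 0) {D : ℝ} (hCD : C ≤ D) :
    ∀ s, s ∉ Set.Icc (-D) D → f s = 0 := by
  intro s hs
  refine hC s (fun hmem => hs ?_)
  exact ⟨le_trans (by linarith) hmem.1, le_trans hmem.2 hCD⟩

lemma pinv_hasDerivAt (hf : Continuous f) (hfc : HasCompactSupport f) (x : ℝ) :
    HasDerivAt (pinv f) (f x) x := by
  obtain ⟨C, hCpos, hC⟩ := exists_supp_bound hfc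
  have hform : pinv f = fun y => (∫ s in (-C)..y, f s) - (1/2) * ∫ s in (-C)..C, f s :=
    funext (pinv_eq_formula hf hfc hC)
  rw [hform]
  exact ((intervalIntegral.integral_hasDerivAt_right (hf.intervalIntegrable _ _)
    (hf.stronglyMeasurableAtFilter _ _) hf.continuousAt)).sub_const _

lemma pinv_continuous (hf : Continuous f) (hfc : HasCompactSupport f) :
    Continuous (pinv f) :=
  continuous_iff_continuousAt.2 fun x => (pinv_hasDerivAt hf hfc x).continuousAt

lemma pinv_tendsto_atTop (hf : Continuous f) (hfc : HasCompactSupport f)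
    (hC : ∀ s, s ∉ Set.Icc (-C) C → f s = 0) :
    ∀ x, C + 1 ≤ x → pinv f x = (1/2) * ∫ s in (-(C+1))..(C+1), f s := by
  intro x hx
  have hC' := supp_bound_mono hC (by linarith : C ≤ C + 1)
  rw [pinv_eq_formula hf hfc hC' x]
  have hsplit : ∫ s in (-(C+1))..x, f s
      = (∫ s in (-(C+1))..(C+1), f s) + ∫ s in (C+1)..x, f s :=
    (intervalIntegral.integral_add_adjacent_intervals
      (hf.intervalIntegrable _ _) (hf.intervalIntegrable _ _)).symm
  have hz : ∫ s in (C+1)..x, f s = 0 := by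
    rw [intervalIntegral.integral_congr (g := fun _ => (0:ℝ))]
    · simp
    · intro s hs
      rw [Set.uIcc_of_le hx] at hs
      have h1 : C < s := by linarith [hs.1]
      exact hC s (by simp only [Set.mem_Icc, not_and_or, not_le]; right; exact h1)
  rw [hsplit, hz]; ring

lemma pinv_tendsto_atBot (hf : Continuous f) (hfc : HasCompactSupport f)
    (hC : ∀ s, s ∉ Set.Icc (-C) C → f s = 0) :
    ∀ x, x ≤ -(C + 1) → pinv f x = -((1/2) * ∫ s in (-(C+1))..(C+1), f s) := by
  intro x hx
  have hC' := supp_bound_mono hC (by linarith : C ≤ C + 1)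
  rw [pinv_eq_formula hf hfc hC' x]
  have hz : ∫ s in (-(C+1))..x, f s = 0 := by
    rw [intervalIntegral.integral_congr (g := fun _ => (0:ℝ))]
    · simp
    · intro s hs
      rw [Set.uIcc_of_ge hx] at hs
      have h1 : s < -C := by linarith [hs.2]
      exact hC s (by simp only [Set.mem_Icc, not_and_or, not_le]; left; exact h1)
  rw [hz]; ring

/-- The adjoint identity `∫ f·∂⁻¹g = −∫ ∂⁻¹f·g`. -/
lemma pinv_adjoint (hf : Continuous f) (hfc : HasCompactSupport f)
    (hg : Continuous g) (hgc : HasCompactSupport g) :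
    ∫ x, f x * pinv g x = -∫ x, pinv f x * g x := by
  obtain ⟨Cf, hCfpos, hCf⟩ := exists_supp_bound hfc
  obtain ⟨Cg, hCgpos, hCg⟩ := exists_supp_bound hgc
  set C := max Cf Cg with hCdef
  have hCf' := supp_bound_mono hCf (le_sup_left : Cf ≤ C)
  have hCg' := supp_bound_mono hCg (le_sup_right : Cg ≤ C)
  set Tf := (1/2) * ∫ s in (-(C+1))..(C+1), f s with hTf
  set Tg := (1/2) * ∫ s in (-(C+1))..(C+1), g s with hTg
  have hderiv : ∀ x, HasDerivAt (fun y => pinv f y * pinv g y)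
      (f x * pinv g x + pinv f x * g x) x :=
    fun x => (pinv_hasDerivAt hf hfc x).mul (pinv_hasDerivAt hg hgc x)
  have hint1 : Integrable (fun x => f x * pinv g x) :=
    (hf.mul (pinv_continuous hg hgc)).integrable_of_hasCompactSupport hfc.mul_right
  have hint2 : Integrable (fun x => pinv f x * g x) :=
    ((pinv_continuous hf hfc).mul hg).integrable_of_hasCompactSupport hgc.mul_left
  have htop : Tendsto (fun y => pinv f y * pinv g y) atTop (𝓝 (Tf * Tg)) := by
    apply Tendsto.congr' _ tendsto_const_nhds
    filter_upwards [eventually_ge_atTop (C+1)] with x hx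
    rw [pinv_tendsto_atTop hf hfc hCf' x hx, pinv_tendsto_atTop hg hgc hCg' x hx]
  have hbot : Tendsto (fun y => pinv f y * pinv g y) atBot (𝓝 ((-Tf) * (-Tg))) := by
    apply Tendsto.congr' _ tendsto_const_nhds
    filter_upwards [eventually_le_atBot (-(C+1))] with x hx
    rw [pinv_tendsto_atBot hf hfc hCf' x hx, pinv_tendsto_atBot hg hgc hCg' x hx]
  have h0 : ∫ x, (f x * pinv g x + pinv f x * g x) = Tf * Tg - (-Tf) * (-Tg) :=
    integral_of_hasDerivAt_of_tendsto hderiv (hint1.add hint2) hbot htop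
  rw [integral_add hint1 hint2] at h0
  have : Tf * Tg - (-Tf) * (-Tg) = 0 := by ring
  rw [this] at h0
  linarith

/-- Integration by parts on `ℝ` for compactly supported functions. -/
lemma ibp_line (hF : ∀ x, HasDerivAt F (F' x) x) (hG : ∀ x, HasDerivAt G (G' x) x)
    (hF' : Continuous F') (hG' : Continuous G')
    (hFc : HasCompactSupport F) (hGc : HasCompactSupport G) :
    ∫ x, F x * G' x = -∫ x, F' x * G x := by
  have hFcont : Continuous F := continuous_iff_continuousAt.2 fun x => (hF x).continuousAt
  have hGcont : Continuous G := continuous_iff_continuousAt.2 fun x => (hG x).continuousAt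
  have hderiv : ∀ x, HasDerivAt (fun y => F y * G y) (F' x * G x + F x * G' x) x :=
    fun x => (hF x).mul (hG x)
  have hint1 : Integrable (fun x => F' x * G x) :=
    (hF'.mul hGcont).integrable_of_hasCompactSupport hGc.mul_left
  have hint2 : Integrable (fun x => F x * G' x) :=
    (hFcont.mul hG').integrable_of_hasCompactSupport hFc.mul_right
  obtain ⟨C, hCpos, hC⟩ := exists_supp_bound (hFc.mul_right (f' := G))
  have htop : Tendsto (fun y => F y * G y) atTop (𝓝 (0:ℝ)) := by
    apply Tendsto.congr' _ tendsto_const_nhds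
    filter_upwards [eventually_ge_atTop (C+1)] with x hx
    have h1 : C < x := by linarith
    exact (hC x (by simp only [Set.mem_Icc, not_and_or, not_le]; right; exact h1)).symm
  have hbot : Tendsto (fun y => F y * G y) atBot (𝓝 (0:ℝ)) := by
    apply Tendsto.congr' _ tendsto_const_nhds
    filter_upwards [eventually_le_atBot (-(C+1))] with x hx
    have h1 : x < -C := by linarith
    exact (hC x (by simp only [Set.mem_Icc, not_and_or, not_le]; left; exact h1)).symm
  have h0 : ∫ x, (F' x * G x + F x * G' x) = (0:ℝ) - 0 :=
    integral_of_hasDerivAt_of_tendsto hderiv (hint1.add hint2) hbot htop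
  rw [integral_add hint1 hint2] at h0
  simp only [sub_zero] at h0
  linarith

lemma pinv_add (hf : Integrable f) (hg : Integrable g) (x : ℝ) :
    pinv (fun s => f s + g s) x = pinv f x + pinv g x := by
  unfold pinv
  rw [integral_add hf.integrableOn hg.integrableOn,
    integral_add hf.integrableOn hg.integrableOn]
  ring

lemma pinv_const_mul (c : ℝ) (f : ℝ → ℝ) (x : ℝ) :
    pinv (fun s => c * f s) x = c * pinv f x := by
  unfold pinv
  rw [MeasureTheory.integral_const_mul, MeasureTheory.integral_const_mul]
  ring
end OneD


/-! ## 2D definitions -/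

section TwoD
variable {g g₁ g₂ : ℝ × ℝ → ℝ}

lemma sectX_cont (hg : Continuous g) (y : ℝ) : Continuous fun s => g (s, y) :=
  hg.comp (continuous_id.prodMk continuous_const)

lemma sectY_cont (hg : Continuous g) (x : ℝ) : Continuous fun s => g (x, s) :=
  hg.comp (continuous_const.prodMk continuous_id)

lemma sectX_supp (hgc : HasCompactSupport g) (y : ℝ) :
    HasCompactSupport fun s => g (s, y) :=
  HasCompactSupport.intro (hgc.image continuous_fst)
    fun s hs => image_eq_zero_of_notMem_tsupport fun hmem => hs ⟨(s, y), hmem, rfl⟩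

lemma sectY_supp (hgc : HasCompactSupport g) (x : ℝ) :
    HasCompactSupport fun s => g (x, s) :=
  HasCompactSupport.intro (hgc.image continuous_snd)
    fun s hs => image_eq_zero_of_notMem_tsupport fun hmem => hs ⟨(x, s), hmem, rfl⟩

lemma sectX_smooth (hg : ContDiff ℝ (⊤ : ℕ∞) g) (y : ℝ) : ContDiff ℝ (⊤ : ℕ∞) fun s : ℝ => g (s, y) :=
  hg.comp (contDiff_id.prodMk contDiff_const)

lemma sectY_smooth (hg : ContDiff ℝ (⊤ : ℕ∞) g) (x : ℝ) : ContDiff ℝ (⊤ : ℕ∞) fun s : ℝ => g (x, s) :=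
  hg.comp (contDiff_const.prodMk contDiff_id)

lemma hasDerivAt_sectX (hg : ContDiff ℝ (⊤ : ℕ∞) g) (p : ℝ × ℝ) :
    HasDerivAt (fun s => g (s, p.2)) (dX g p) p.1 :=
  (((sectX_smooth hg p.2).differentiable (by simp)) p.1).hasDerivAt

lemma hasDerivAt_sectY (hg : ContDiff ℝ (⊤ : ℕ∞) g) (p : ℝ × ℝ) :
    HasDerivAt (fun s => g (p.1, s)) (dY g p) p.2 :=
  (((sectY_smooth hg p.1).differentiable (by simp)) p.2).hasDerivAt

lemma dX_eq_fderiv (hg : ContDiff ℝ (⊤ : ℕ∞) g) (p : ℝ × ℝ) :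
    dX g p = fderiv ℝ g p (1, 0) := by
  have h1 : HasDerivAt (fun x : ℝ => g (x, p.2)) (fderiv ℝ g p (1, 0)) p.1 :=
    ((hg.differentiable (by simp)) p).hasFDerivAt.comp_hasDerivAt p.1
      ((hasDerivAt_id p.1).prodMk (hasDerivAt_const p.1 p.2))
  exact ((hasDerivAt_sectX hg p).unique h1)

lemma dY_eq_fderiv (hg : ContDiff ℝ (⊤ : ℕ∞) g) (p : ℝ × ℝ) :
    dY g p = fderiv ℝ g p (0, 1) := by
  have h1 : HasDerivAt (fun y : ℝ => g (p.1, y)) (fderiv ℝ g p (0, 1)) p.2 :=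
    ((hg.differentiable (by simp)) p).hasFDerivAt.comp_hasDerivAt p.2
      ((hasDerivAt_const p.2 p.1).prodMk (hasDerivAt_id p.2))
  exact ((hasDerivAt_sectY hg p).unique h1)

lemma dX_contDiff (hg : ContDiff ℝ (⊤ : ℕ∞) g) : ContDiff ℝ (⊤ : ℕ∞) (dX g) := by
  have : dX g = fun p => fderiv ℝ g p (1, 0) := funext fun p => dX_eq_fderiv hg p
  rw [this]
  exact (hg.fderiv_right (le_refl _)).clm_apply contDiff_const

lemma dY_contDiff (hg : ContDiff ℝ (⊤ : ℕ∞) g) : ContDiff ℝ (⊤ : ℕ∞) (dY g) := by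
  have : dY g = fun p => fderiv ℝ g p (0, 1) := funext fun p => dY_eq_fderiv hg p
  rw [this]
  exact (hg.fderiv_right (le_refl _)).clm_apply contDiff_const

lemma dX_zero_of_nmem (hp : p ∉ tsupport g) : dX g p = 0 := by
  have hev : g =ᶠ[𝓝 p] 0 := notMem_tsupport_iff_eventuallyEq.1 hp
  have hι : Filter.Tendsto (fun x : ℝ => (x, p.2)) (𝓝 p.1) (𝓝 p) := by
    have : Filter.Tendsto (fun x : ℝ => (x, p.2)) (𝓝 p.1) (𝓝 (p.1, p.2)) :=
      (continuous_id.prodMk continuous_const).continuousAt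
    simpa using this
  have : (fun x : ℝ => g (x, p.2)) =ᶠ[𝓝 p.1] fun _ => 0 := hι.eventually hev
  rw [dX]; rw [this.deriv_eq]; exact deriv_const _ _

lemma dY_zero_of_nmem (hp : p ∉ tsupport g) : dY g p = 0 := by
  have hev : g =ᶠ[𝓝 p] 0 := notMem_tsupport_iff_eventuallyEq.1 hp
  have hι : Filter.Tendsto (fun y : ℝ => (p.1, y)) (𝓝 p.2) (𝓝 p) := by
    have : Filter.Tendsto (fun y : ℝ => (p.1, y)) (𝓝 p.2) (𝓝 (p.1, p.2)) :=
      (continuous_const.prodMk continuous_id).continuousAt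
    simpa using this
  have : (fun y : ℝ => g (p.1, y)) =ᶠ[𝓝 p.2] fun _ => 0 := hι.eventually hev
  rw [dY]; rw [this.deriv_eq]; exact deriv_const _ _

lemma dX_supp (hgc : HasCompactSupport g) : HasCompactSupport (dX g) :=
  HasCompactSupport.intro hgc fun _ hp => dX_zero_of_nmem hp

lemma dY_supp (hgc : HasCompactSupport g) : HasCompactSupport (dY g) :=
  HasCompactSupport.intro hgc fun _ hp => dY_zero_of_nmem hp

lemma dX_mul (hg₁ : ContDiff ℝ (⊤ : ℕ∞) g₁) (hg₂ : ContDiff ℝ (⊤ : ℕ∞) g₂) (p : ℝ × ℝ) :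
    dX (fun q => g₁ q * g₂ q) p = dX g₁ p * g₂ p + g₁ p * dX g₂ p :=
  ((hasDerivAt_sectX hg₁ p).mul (hasDerivAt_sectX hg₂ p)).deriv

lemma dY_mul (hg₁ : ContDiff ℝ (⊤ : ℕ∞) g₁) (hg₂ : ContDiff ℝ (⊤ : ℕ∞) g₂) (p : ℝ × ℝ) :
    dY (fun q => g₁ q * g₂ q) p = dY g₁ p * g₂ p + g₁ p * dY g₂ p :=
  ((hasDerivAt_sectY hg₁ p).mul (hasDerivAt_sectY hg₂ p)).deriv

lemma dX_add_mul (c : ℝ) (hg₁ : ContDiff ℝ (⊤ : ℕ∞) g₁) (hg₂ : ContDiff ℝ (⊤ : ℕ∞) g₂) (p : ℝ × ℝ) :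
    dX (fun q => g₁ q + c * g₂ q) p = dX g₁ p + c * dX g₂ p :=
  ((hasDerivAt_sectX hg₁ p).add ((hasDerivAt_sectX hg₂ p).const_mul c)).deriv

lemma dY_add_mul (c : ℝ) (hg₁ : ContDiff ℝ (⊤ : ℕ∞) g₁) (hg₂ : ContDiff ℝ (⊤ : ℕ∞) g₂) (p : ℝ × ℝ) :
    dY (fun q => g₁ q + c * g₂ q) p = dY g₁ p + c * dY g₂ p :=
  ((hasDerivAt_sectY hg₁ p).add ((hasDerivAt_sectY hg₂ p).const_mul c)).deriv
end TwoD

section PinvX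
variable {g g₁ g₂ : ℝ × ℝ → ℝ}

lemma exists_supp_bound2 (hgc : HasCompactSupport g) :
    ∃ C : ℝ, 0 < C ∧ tsupport g ⊆ Set.Icc (-C) C ×ˢ Set.Icc (-C) C := by
  obtain ⟨r, hr, hsub⟩ := hgc.isBounded.subset_closedBall_lt 0 0
  refine ⟨r, hr, fun q hq => ?_⟩
  have := hsub hq
  rw [show (0 : ℝ × ℝ) = ((0 : ℝ), (0 : ℝ)) from rfl, ← closedBall_prod_same,
    Real.closedBall_eq_Icc] at this
  simpa [zero_sub, zero_add] using this

lemma sect_bound_of_box {C : ℝ} (hbox : tsupport g ⊆ Set.Icc (-C) C ×ˢ Set.Icc (-C) C)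
    (y : ℝ) : ∀ s, s ∉ Set.Icc (-C) C → g (s, y) = 0 := by
  intro s hs
  exact image_eq_zero_of_notMem_tsupport fun hmem => hs (hbox hmem).1

lemma pinvX_formula {C : ℝ} (hg : Continuous g) (hgc : HasCompactSupport g)
    (hbox : tsupport g ⊆ Set.Icc (-C) C ×ˢ Set.Icc (-C) C) (p : ℝ × ℝ) :
    pinvX g p = (∫ s in (-C)..p.1, g (s, p.2)) - (1/2) * ∫ s in (-C)..C, g (s, p.2) :=
  pinv_eq_formula (sectX_cont hg p.2) (sectX_supp hgc p.2) (sect_bound_of_box hbox p.2) p.1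

lemma pinvX_continuous (hg : Continuous g) (hgc : HasCompactSupport g) :
    Continuous (pinvX g) := by
  obtain ⟨C, hCpos, hbox⟩ := exists_supp_bound2 hgc
  have hform : pinvX g = fun p : ℝ × ℝ =>
      (∫ s in (-C)..p.1, g (s, p.2)) - (1/2) * ∫ s in (-C)..C, g (s, p.2) :=
    funext (pinvX_formula hg hgc hbox)
  rw [hform]
  have hunc : Continuous (Function.uncurry fun (p : ℝ × ℝ) (s : ℝ) => g (s, p.2)) := by
    apply hg.comp
    exact (continuous_snd.prodMk (continuous_snd.comp continuous_fst))
  exact (intervalIntegral.continuous_parametric_intervalIntegral_of_continuous hunc continuous_fst).sub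
    (continuous_const.mul (intervalIntegral.continuous_parametric_intervalIntegral_of_continuous' hunc _ _))

lemma pinvX_hasDerivAt_y (hg : ContDiff ℝ (⊤ : ℕ∞) g) (hgc : HasCompactSupport g) (p : ℝ × ℝ) :
    HasDerivAt (fun y => pinvX g (p.1, y)) (pinvX (dY g) p) p.2 := by
  obtain ⟨C, hCpos, hbox⟩ := exists_supp_bound2 hgc
  have hboxY : tsupport (dY g) ⊆ Set.Icc (-C) C ×ˢ Set.Icc (-C) C := by
    refine subset_trans (closure_minimal ?_ (isClosed_Icc.prod isClosed_Icc)) subset_rfl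
    intro q hq
    by_contra hnq
    exact hq (dY_zero_of_nmem fun hmem => hnq (hbox hmem))
  have hYcont : Continuous (dY g) := (dY_contDiff hg).continuous
  have hYsupp : HasCompactSupport (dY g) := dY_supp hgc
  obtain ⟨M, hM⟩ := hYsupp.exists_bound_of_continuous hYcont
  have hform : ∀ y, pinvX g (p.1, y)
      = (∫ s in (-C)..p.1, g (s, y)) - (1/2) * ∫ s in (-C)..C, g (s, y) :=
    fun y => pinvX_formula hg.continuous hgc hbox (p.1, y)
  have key : ∀ b : ℝ, HasDerivAt (fun y => ∫ s in (-C)..b, g (s, y))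
      (∫ s in (-C)..b, dY g (s, p.2)) p.2 := by
    intro b
    have := intervalIntegral.hasDerivAt_integral_of_dominated_loc_of_deriv_le
      (F := fun y s => g (s, y)) (F' := fun y s => dY g (s, y)) (a := -C) (b := b)
      (x₀ := p.2) (bound := fun _ => M) (s := Metric.ball p.2 1) (μ := volume) (Metric.ball_mem_nhds _ one_pos)
      ?_ ?_ ?_ ?_ ?_ ?_
    · exact this.2
    · filter_upwards with y
      exact ((sectX_cont hg.continuous y).aestronglyMeasurable).restrict
    · exact (sectX_cont hg.continuous p.2).intervalIntegrable _ _
    · exact ((sectX_cont hYcont p.2).aestronglyMeasurable).restrict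
    · filter_upwards with t _
      intro x _
      exact hM (t, x)
    · exact intervalIntegrable_const
    · filter_upwards with t _
      intro x _
      exact hasDerivAt_sectY hg (t, x)
  have h1 := (key p.1).sub ((key C).const_mul (1/2))
  have h2 : HasDerivAt (fun y => pinvX g (p.1, y))
      ((∫ s in (-C)..p.1, dY g (s, p.2)) - (1/2) * ∫ s in (-C)..C, dY g (s, p.2)) p.2 := by
    refine HasDerivAt.congr_of_eventuallyEq h1 ?_
    filter_upwards with y
    exact hform y
  rw [pinvX_formula hYcont hYsupp hboxY p]
  exact h2

lemma pinvX_add_mul (c : ℝ) (hg₁ : Continuous g₁) (hg₁c : HasCompactSupport g₁)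
    (hg₂ : Continuous g₂) (hg₂c : HasCompactSupport g₂) (p : ℝ × ℝ) :
    pinvX (fun q => g₁ q + c * g₂ q) p = pinvX g₁ p + c * pinvX g₂ p := by
  show pinv (fun s => g₁ (s, p.2) + c * g₂ (s, p.2)) p.1 = _
  rw [pinv_add (g := fun s => c * g₂ (s, p.2))
    ((sectX_cont hg₁ p.2).integrable_of_hasCompactSupport (sectX_supp hg₁c p.2))
    ((continuous_const.mul (sectX_cont hg₂ p.2)).integrable_of_hasCompactSupport
      ((sectX_supp hg₂c p.2).mul_left)),
    pinv_const_mul]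
  rfl
end PinvX

/-! ## CS predicate and helpers -/

structure CS (g : ℝ × ℝ → ℝ) : Prop where
  smooth : ContDiff ℝ (⊤ : ℕ∞) g
  supp : HasCompactSupport g

namespace CS
variable {g g₁ g₂ : ℝ × ℝ → ℝ}

lemma cont (hg : CS g) : Continuous g := hg.smooth.continuous

lemma mul (h1 : CS g₁) (h2 : CS g₂) : CS fun q => g₁ q * g₂ q :=
  ⟨h1.smooth.mul h2.smooth, h1.supp.mul_right⟩

lemma dX' (hg : CS g) : CS (dX g) := ⟨dX_contDiff hg.smooth, dX_supp hg.supp⟩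
lemma dY' (hg : CS g) : CS (dY g) := ⟨dY_contDiff hg.smooth, dY_supp hg.supp⟩

lemma integrable (hg : CS g) : Integrable g :=
  hg.cont.integrable_of_hasCompactSupport hg.supp

lemma integrable_mul_cont (h1 : CS g₁) (h2 : Continuous g₂) :
    Integrable fun q => g₁ q * g₂ q :=
  (h1.cont.mul h2).integrable_of_hasCompactSupport h1.supp.mul_right

lemma integrable_cont_mul (h1 : Continuous g₁) (h2 : CS g₂) :
    Integrable fun q => g₁ q * g₂ q :=
  (h1.mul h2.cont).integrable_of_hasCompactSupport h2.supp.mul_left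

lemma comp_swap (hg : CS g) : CS (g ∘ Prod.swap) :=
  ⟨hg.smooth.comp (contDiff_snd.prodMk contDiff_fst),
    hg.supp.comp_homeomorph (Homeomorph.prodComm ℝ ℝ)⟩

end CS

/-! ## Fubini helpers -/

lemma integral2_swap (f : ℝ × ℝ → ℝ) : ∫ p : ℝ × ℝ, f p.swap = ∫ p : ℝ × ℝ, f p := by
  rw [MeasureTheory.Measure.volume_eq_prod]
  exact MeasureTheory.integral_prod_swap f

lemma int2_eq_xy (f : ℝ × ℝ → ℝ) (hf : Integrable f) :
    ∫ p : ℝ × ℝ, f p = ∫ x : ℝ, ∫ y : ℝ, f (x, y) := by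
  rw [MeasureTheory.Measure.volume_eq_prod]
  exact MeasureTheory.integral_prod f (by rwa [← MeasureTheory.Measure.volume_eq_prod])

lemma int2_eq_yx (f : ℝ × ℝ → ℝ) (hf : Integrable f) :
    ∫ p : ℝ × ℝ, f p = ∫ y : ℝ, ∫ x : ℝ, f (x, y) := by
  rw [int2_eq_xy f hf]
  exact MeasureTheory.integral_integral_swap
    (by rw [← MeasureTheory.Measure.volume_eq_prod]; exact hf)

/-! ## 2D adjoint and integration by parts -/

lemma adj2 {f g : ℝ × ℝ → ℝ} (hf : CS f) (hg : CS g) :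
    ∫ p : ℝ × ℝ, f p * pinvX g p = -∫ p : ℝ × ℝ, pinvX f p * g p := by
  have hPg : Continuous (pinvX g) := pinvX_continuous hg.cont hg.supp
  have hPf : Continuous (pinvX f) := pinvX_continuous hf.cont hf.supp
  have hint1 : Integrable fun p : ℝ × ℝ => f p * pinvX g p := hf.integrable_mul_cont hPg
  have hint2 : Integrable fun p : ℝ × ℝ => pinvX f p * g p := CS.integrable_cont_mul hPf hg
  rw [int2_eq_yx _ hint1, int2_eq_yx _ hint2, ← integral_neg]
  have : ∀ y : ℝ, ∫ x : ℝ, f (x, y) * pinvX g (x, y)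
      = -∫ x : ℝ, pinvX f (x, y) * g (x, y) := by
    intro y
    exact pinv_adjoint (sectX_cont hf.cont y) (sectX_supp hf.supp y)
      (sectX_cont hg.cont y) (sectX_supp hg.supp y)
  exact integral_congr_ae (Filter.Eventually.of_forall this)

lemma ibp2_y {F F' G : ℝ × ℝ → ℝ}
    (hFd : ∀ p : ℝ × ℝ, HasDerivAt (fun y => F (p.1, y)) (F' p) p.2)
    (hFcont : Continuous F) (hF'cont : Continuous F') (hFsupp : HasCompactSupport F)
    (hG : CS G) :
    ∫ p : ℝ × ℝ, F p * dY G p = -∫ p : ℝ × ℝ, F' p * G p := by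
  have hint1 : Integrable fun p : ℝ × ℝ => F p * dY G p :=
    CS.integrable_cont_mul hFcont hG.dY'
  have hint2 : Integrable fun p : ℝ × ℝ => F' p * G p :=
    CS.integrable_cont_mul hF'cont hG
  rw [int2_eq_xy _ hint1, int2_eq_xy _ hint2, ← integral_neg]
  have : ∀ x : ℝ, ∫ y : ℝ, F (x, y) * dY G (x, y)
      = -∫ y : ℝ, F' (x, y) * G (x, y) := by
    intro x
    exact ibp_line (F := fun y => F (x, y)) (F' := fun y => F' (x, y))
      (G := fun y => G (x, y)) (G' := fun y => dY G (x, y))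
      (fun y => hFd (x, y)) (fun y => hasDerivAt_sectY hG.smooth (x, y))
      (sectY_cont hF'cont x) (sectY_cont (dY_contDiff hG.smooth).continuous x)
      (sectY_supp hFsupp x) (sectY_supp hG.supp x)
  exact integral_congr_ae (Filter.Eventually.of_forall this)

lemma pinvX_add {g₁ g₂ : ℝ × ℝ → ℝ} (hg₁ : Continuous g₁) (hg₁c : HasCompactSupport g₁)
    (hg₂ : Continuous g₂) (hg₂c : HasCompactSupport g₂) (p : ℝ × ℝ) :
    pinvX (fun q => g₁ q + g₂ q) p = pinvX g₁ p + pinvX g₂ p := by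
  show pinv (fun s => g₁ (s, p.2) + g₂ (s, p.2)) p.1 = _
  rw [pinv_add ((sectX_cont hg₁ p.2).integrable_of_hasCompactSupport (sectX_supp hg₁c p.2))
    ((sectX_cont hg₂ p.2).integrable_of_hasCompactSupport (sectX_supp hg₂c p.2))]
  rfl

/-- The key computation for the `y`-part of the variation. -/
lemma key_y {a b h : ℝ × ℝ → ℝ} (ha : CS a) (hb : CS b) (hh : CS h) :
    (3 * ∫ p : ℝ × ℝ, dY a p * h p * pinvX (fun q => a q * dY b q) p)
      + 3 * ∫ p : ℝ × ℝ, dY a p * b p * pinvX (fun q => a q * dY h q) p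
    = (∫ p : ℝ × ℝ, 3 * pinvX (dY fun q => a q * b q) p * dY a p * h p)
      + ∫ p : ℝ × ℝ, 3 * pinvX (dY fun q => dY a q * b q) p * a p * h p := by
  have hg₁ : CS fun q => dY a q * b q := ha.dY'.mul hb
  have hg₂ : CS fun q => a q * dY h q := ha.mul hh.dY'
  have hg₃ : CS fun q => a q * dY b q := ha.mul hb.dY'
  have hP₁ : Continuous (pinvX fun q => dY a q * b q) := pinvX_continuous hg₁.cont hg₁.supp
  have hP₁' : Continuous (pinvX (dY fun q => dY a q * b q)) :=
    pinvX_continuous hg₁.dY'.cont hg₁.dY'.supp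
  have hP₃ : Continuous (pinvX fun q => a q * dY b q) := pinvX_continuous hg₃.cont hg₃.supp
  -- Step 1 : adjoint
  have step1 : ∫ p : ℝ × ℝ, dY a p * b p * pinvX (fun q => a q * dY h q) p
      = -∫ p : ℝ × ℝ, pinvX (fun q => dY a q * b q) p * (a p * dY h p) :=
    adj2 hg₁ hg₂
  -- Step 2 : rewrite as F * dY h
  have step2 : ∫ p : ℝ × ℝ, pinvX (fun q => dY a q * b q) p * (a p * dY h p)
      = ∫ p : ℝ × ℝ, (pinvX (fun q => dY a q * b q) p * a p) * dY h p := by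
    apply integral_congr_ae
    filter_upwards with p
    ring
  -- Step 3 : integrate by parts in y
  have step3 : ∫ p : ℝ × ℝ, (pinvX (fun q => dY a q * b q) p * a p) * dY h p
      = -∫ p : ℝ × ℝ, (pinvX (dY fun q => dY a q * b q) p * a p
          + pinvX (fun q => dY a q * b q) p * dY a p) * h p := by
    apply ibp2_y (F := fun q => pinvX (fun q' => dY a q' * b q') q * a q)
      (F' := fun q => pinvX (dY fun q' => dY a q' * b q') q * a q
          + pinvX (fun q' => dY a q' * b q') q * dY a q)
    · intro p
      exact (pinvX_hasDerivAt_y hg₁.smooth hg₁.supp p).mul (hasDerivAt_sectY ha.smooth p)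
    · exact hP₁.mul ha.cont
    · exact (hP₁'.mul ha.cont).add (hP₁.mul (dY_contDiff ha.smooth).continuous)
    · exact ha.supp.mul_left
    · exact hh
  -- pointwise additivity of pinvX over the product rule
  have hsplit : ∀ p : ℝ × ℝ, pinvX (dY fun q => a q * b q) p
      = pinvX (fun q => dY a q * b q) p + pinvX (fun q => a q * dY b q) p := by
    intro p
    rw [show (dY fun q => a q * b q) = fun q => dY a q * b q + a q * dY b q from
      funext fun q => dY_mul ha.smooth hb.smooth q]
    exact pinvX_add hg₁.cont hg₁.supp hg₃.cont hg₃.supp p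
  rw [step1, step2, step3]
  -- now everything is a single integral identity
  rw [neg_neg, ← MeasureTheory.integral_const_mul, ← MeasureTheory.integral_const_mul]
  have hintL1 : Integrable fun p : ℝ × ℝ =>
      3 * (dY a p * h p * pinvX (fun q => a q * dY b q) p) := by
    apply Integrable.const_mul
    exact ((ha.dY'.mul hh).integrable_mul_cont hP₃)
  have hintL2 : Integrable fun p : ℝ × ℝ =>
      3 * ((pinvX (dY fun q => dY a q * b q) p * a p
        + pinvX (fun q => dY a q * b q) p * dY a p) * h p) := by
    apply Integrable.const_mul
    apply CS.integrable_cont_mul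
    · exact (hP₁'.mul ha.cont).add (hP₁.mul (dY_contDiff ha.smooth).continuous)
    · exact hh
  have hintR1 : Integrable fun p : ℝ × ℝ =>
      3 * pinvX (dY fun q => a q * b q) p * dY a p * h p := by
    have : Continuous fun p : ℝ × ℝ => 3 * pinvX (dY fun q => a q * b q) p :=
      continuous_const.mul (pinvX_continuous (ha.mul hb).dY'.cont (ha.mul hb).dY'.supp)
    exact ((this.mul (dY_contDiff ha.smooth).continuous).mul hh.cont).integrable_of_hasCompactSupport
      hh.supp.mul_left
  rw [← integral_add hintL1 hintL2, ← integral_add hintR1 (by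
    exact ((continuous_const.mul hP₁').mul ha.cont).mul hh.cont |>.integrable_of_hasCompactSupport
      hh.supp.mul_left)]
  apply integral_congr_ae
  filter_upwards with p
  rw [hsplit p]
  ring

/-- Key computation for the linear (`H₁`) `y`-part. -/
lemma key1_y {a h : ℝ × ℝ → ℝ} (ha : CS a) (hh : CS h) :
    ∫ p : ℝ × ℝ, dY (dY a) p * dY h p = -∫ p : ℝ × ℝ, dY (dY (dY a)) p * h p := by
  apply ibp2_y (F := dY (dY a)) (F' := dY (dY (dY a)))
  · intro p
    exact hasDerivAt_sectY (dY_contDiff (dY_contDiff ha.smooth)) p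
  · exact (dY_contDiff (dY_contDiff ha.smooth)).continuous
  · exact (dY_contDiff (dY_contDiff (dY_contDiff ha.smooth))).continuous
  · exact dY_supp (dY_supp ha.supp)
  · exact hh

section Expand
variable {a b h : ℝ × ℝ → ℝ} {ε : ℝ}

lemma CS.add_mul (hb : CS b) (hh : CS h) (ε : ℝ) : CS fun p => b p + ε * h p :=
  ⟨hb.smooth.add (contDiff_const.mul hh.smooth),
    (hb.supp.add hh.supp.mul_left)⟩

lemma H₁_expand (ha : CS a) (hb : CS b) (hh : CS h) (ε : ℝ) :
    H₁ a (fun p => b p + ε * h p)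
      = H₁ a b + ε * ∫ p : ℝ × ℝ, (dX (dX a) p * dX h p + dY (dY a) p * dY h p) := by
  unfold H₁
  have hpt : ∀ p : ℝ × ℝ,
      dX (dX a) p * dX (fun p' => b p' + ε * h p') p
        + dY (dY a) p * dY (fun p' => b p' + ε * h p') p
      = (dX (dX a) p * dX b p + dY (dY a) p * dY b p)
        + ε * (dX (dX a) p * dX h p + dY (dY a) p * dY h p) := by
    intro p
    rw [dX_add_mul ε hb.smooth hh.smooth p, dY_add_mul ε hb.smooth hh.smooth p]
    ring
  rw [integral_congr_ae (Filter.Eventually.of_forall hpt)]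
  rw [integral_add, MeasureTheory.integral_const_mul]
  · exact ((ha.dX'.dX'.mul hb.dX').integrable).add ((ha.dY'.dY'.mul hb.dY').integrable)
  · exact (((ha.dX'.dX'.mul hh.dX').integrable).add ((ha.dY'.dY'.mul hh.dY').integrable)).const_mul ε

lemma H₂_expand (ha : CS a) (hb : CS b) (hh : CS h) (ε : ℝ) :
    H₂ a (fun p => b p + ε * h p)
      = H₂ a b
        + ε * ((3 * ∫ p : ℝ × ℝ, dY a p * h p * pinvX (fun q => a q * dY b q) p)
            + 3 * ∫ p : ℝ × ℝ, dY a p * b p * pinvX (fun q => a q * dY h q) p)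
        + ε^2 * (3 * ∫ p : ℝ × ℝ, dY a p * h p * pinvX (fun q => a q * dY h q) p) := by
  unfold H₂
  have hg₃ : CS fun q => a q * dY b q := ha.mul hb.dY'
  have hg₂ : CS fun q => a q * dY h q := ha.mul hh.dY'
  have hP : Continuous (pinvX fun q => a q * dY b q) := pinvX_continuous hg₃.cont hg₃.supp
  have hP' : Continuous (pinvX fun q => a q * dY h q) := pinvX_continuous hg₂.cont hg₂.supp
  have hpinv : ∀ p : ℝ × ℝ, pinvX (fun q => a q * dY (fun p' => b p' + ε * h p') q) p
      = pinvX (fun q => a q * dY b q) p + ε * pinvX (fun q => a q * dY h q) p := by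
    intro p
    rw [show (fun q => a q * dY (fun p' => b p' + ε * h p') q)
        = fun q => (a q * dY b q) + ε * (a q * dY h q) from
      funext fun q => by rw [dY_add_mul ε hb.smooth hh.smooth q]; ring]
    exact pinvX_add_mul ε hg₃.cont hg₃.supp hg₂.cont hg₂.supp p
  have hpt : ∀ p : ℝ × ℝ,
      dY a p * (b p + ε * h p) * pinvX (fun q => a q * dY (fun p' => b p' + ε * h p') q) p
      = dY a p * b p * pinvX (fun q => a q * dY b q) p
        + ε * (dY a p * h p * pinvX (fun q => a q * dY b q) p
            + dY a p * b p * pinvX (fun q => a q * dY h q) p)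
        + ε^2 * (dY a p * h p * pinvX (fun q => a q * dY h q) p) := by
    intro p
    rw [hpinv p]
    ring
  rw [integral_congr_ae (Filter.Eventually.of_forall hpt)]
  have i1 : Integrable fun p : ℝ × ℝ => dY a p * b p * pinvX (fun q => a q * dY b q) p :=
    (ha.dY'.mul hb).integrable_mul_cont hP
  have i2 : Integrable fun p : ℝ × ℝ =>
      ε * (dY a p * h p * pinvX (fun q => a q * dY b q) p
        + dY a p * b p * pinvX (fun q => a q * dY h q) p) :=
    (((ha.dY'.mul hh).integrable_mul_cont hP).add
      ((ha.dY'.mul hb).integrable_mul_cont hP')).const_mul ε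
  have i3 : Integrable fun p : ℝ × ℝ =>
      ε^2 * (dY a p * h p * pinvX (fun q => a q * dY h q) p) :=
    ((ha.dY'.mul hh).integrable_mul_cont hP').const_mul _
  have i12 : Integrable fun p : ℝ × ℝ =>
      dY a p * b p * pinvX (fun q => a q * dY b q) p
        + ε * (dY a p * h p * pinvX (fun q => a q * dY b q) p
            + dY a p * b p * pinvX (fun q => a q * dY h q) p) := i1.add i2
  have i2' : Integrable fun p : ℝ × ℝ =>
      dY a p * h p * pinvX (fun q => a q * dY b q) p
        + dY a p * b p * pinvX (fun q => a q * dY h q) p :=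
    ((ha.dY'.mul hh).integrable_mul_cont hP).add ((ha.dY'.mul hb).integrable_mul_cont hP')
  rw [integral_add i12 i3, integral_add i1 i2,
    MeasureTheory.integral_const_mul, MeasureTheory.integral_const_mul,
    integral_add ((ha.dY'.mul hh).integrable_mul_cont hP)
      ((ha.dY'.mul hb).integrable_mul_cont hP')]
  ring

lemma H₃_eq (u v : ℝ × ℝ → ℝ) : H₃ u v = H₂ (u ∘ Prod.swap) (v ∘ Prod.swap) := by
  unfold H₃ H₂
  congr 1
  conv_rhs => rw [← integral2_swap (fun p : ℝ × ℝ =>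
    dY (u ∘ Prod.swap) p * (v ∘ Prod.swap) p *
      pinvX (fun q => (u ∘ Prod.swap) q * dY (v ∘ Prod.swap) q) p)]
  exact integral_congr_ae (Filter.Eventually.of_forall fun p => rfl)
end Expand

lemma hasDerivAt_quadratic {f : ℝ → ℝ} {c L K : ℝ}
    (hf : ∀ ε, f ε = c + (L * ε + K * ε ^ 2)) : HasDerivAt f L 0 := by
  have h2 : HasDerivAt (fun ε : ℝ => L * ε) L 0 := by
    simpa using (hasDerivAt_id (0 : ℝ)).const_mul L
  have h3 : HasDerivAt (fun ε : ℝ => K * ε ^ 2) 0 0 := by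
    simpa using (hasDerivAt_pow 2 (0 : ℝ)).const_mul K
  have h1 : HasDerivAt (fun ε : ℝ => c + (L * ε + K * ε ^ 2)) L 0 := by
    simpa using ((h2.add h3).const_add c)
  exact h1.congr_of_eventuallyEq (Filter.Eventually.of_forall fun ε => hf ε)

lemma pinvY_continuous {g : ℝ × ℝ → ℝ} (hg : Continuous g) (hgc : HasCompactSupport g) :
    Continuous (pinvY g) := by
  have : pinvY g = (pinvX (g ∘ Prod.swap)) ∘ Prod.swap := rfl
  rw [this]
  exact (pinvX_continuous (hg.comp continuous_swap)
    (hgc.comp_homeomorph (Homeomorph.prodComm ℝ ℝ))).comp continuous_swap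

lemma main_core {a b h : ℝ × ℝ → ℝ} (ha : CS a) (hb : CS b) (hh : CS h)
    (v w v₁ w₁ : ℝ × ℝ → ℝ)
    (hv : ∀ p, v p = 3 * pinvX (dY fun q => a q * b q) p)
    (hw : ∀ p, w p = 3 * pinvY (dX fun q => a q * b q) p)
    (hv₁ : ∀ p, v₁ p = 3 * pinvX (dY fun q => dY a q * b q) p)
    (hw₁ : ∀ p, w₁ p = 3 * pinvY (dX fun q => dX a q * b q) p)
    (T : ℝ × ℝ → ℝ)
    (hT : ∀ p, T p = dX (dX (dX a)) p + dY (dY (dY a)) p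
          - v p * dY a p - w p * dX a p - (v₁ p + w₁ p) * a p) :
    HasDerivAt (fun ε : ℝ => Ham a (fun p => b p + ε * h p)) (-∫ p : ℝ × ℝ, T p * h p) 0 := by
  have ha' : CS (a ∘ Prod.swap) := ha.comp_swap
  have hb' : CS (b ∘ Prod.swap) := hb.comp_swap
  have hh' : CS (h ∘ Prod.swap) := hh.comp_swap
  -- the big linear coefficient
  set L1 : ℝ := ∫ p : ℝ × ℝ, (dX (dX a) p * dX h p + dY (dY a) p * dY h p) with hL1
  set J2a : ℝ := 3 * ∫ p : ℝ × ℝ, dY a p * h p * pinvX (fun q => a q * dY b q) p with hJ2a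
  set J2b : ℝ := 3 * ∫ p : ℝ × ℝ, dY a p * b p * pinvX (fun q => a q * dY h q) p with hJ2b
  set J3a : ℝ := 3 * ∫ p : ℝ × ℝ, dY (a ∘ Prod.swap) p * (h ∘ Prod.swap) p *
      pinvX (fun q => (a ∘ Prod.swap) q * dY (b ∘ Prod.swap) q) p with hJ3a
  set J3b : ℝ := 3 * ∫ p : ℝ × ℝ, dY (a ∘ Prod.swap) p * (b ∘ Prod.swap) p *
      pinvX (fun q => (a ∘ Prod.swap) q * dY (h ∘ Prod.swap) q) p with hJ3b
  set K2 : ℝ := 3 * ∫ p : ℝ × ℝ, dY a p * h p * pinvX (fun q => a q * dY h q) p with hK2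
  set K3 : ℝ := 3 * ∫ p : ℝ × ℝ, dY (a ∘ Prod.swap) p * (h ∘ Prod.swap) p *
      pinvX (fun q => (a ∘ Prod.swap) q * dY (h ∘ Prod.swap) q) p with hK3
  have main : HasDerivAt (fun ε : ℝ => Ham a (fun p => b p + ε * h p))
      (L1 + (J2a + J2b) + (J3a + J3b)) 0 := by
    apply hasDerivAt_quadratic (c := Ham a b) (K := K2 + K3)
    intro ε
    show H₁ a (fun p => b p + ε * h p) + H₂ a (fun p => b p + ε * h p)
        + H₃ a (fun p => b p + ε * h p) = _
    rw [H₁_expand ha hb hh ε, H₂_expand ha hb hh ε,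
      show H₃ a (fun p => b p + ε * h p)
        = H₂ (a ∘ Prod.swap) (fun p => (b ∘ Prod.swap) p + ε * (h ∘ Prod.swap) p) from
        H₃_eq a _,
      H₂_expand ha' hb' hh' ε,
      show Ham a b = H₁ a b + H₂ a b + H₂ (a ∘ Prod.swap) (b ∘ Prod.swap) from by
        rw [Ham, H₃_eq a b]]
    rw [hL1, hJ2a, hJ2b, hJ3a, hJ3b, hK2, hK3]
    ring
  have hfinal : L1 + (J2a + J2b) + (J3a + J3b) = -∫ p : ℝ × ℝ, T p * h p := by
    -- continuity of the pseudopotentials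
    have hvc : Continuous v := by
      rw [show v = fun p => 3 * pinvX (dY fun q => a q * b q) p from funext hv]
      exact continuous_const.mul (pinvX_continuous (ha.mul hb).dY'.cont (ha.mul hb).dY'.supp)
    have hwc : Continuous w := by
      rw [show w = fun p => 3 * pinvY (dX fun q => a q * b q) p from funext hw]
      exact continuous_const.mul (pinvY_continuous (ha.mul hb).dX'.cont (ha.mul hb).dX'.supp)
    have hv₁c : Continuous v₁ := by
      rw [show v₁ = fun p => 3 * pinvX (dY fun q => dY a q * b q) p from funext hv₁]
      exact continuous_const.mul (pinvX_continuous (ha.dY'.mul hb).dY'.cont (ha.dY'.mul hb).dY'.supp)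
    have hw₁c : Continuous w₁ := by
      rw [show w₁ = fun p => 3 * pinvY (dX fun q => dX a q * b q) p from funext hw₁]
      exact continuous_const.mul (pinvY_continuous (ha.dX'.mul hb).dX'.cont (ha.dX'.mul hb).dX'.supp)
    -- split `L1`
    have c1 : L1 = (∫ p : ℝ × ℝ, dX (dX a) p * dX h p)
        + ∫ p : ℝ × ℝ, dY (dY a) p * dY h p :=
      integral_add (ha.dX'.dX'.mul hh.dX').integrable (ha.dY'.dY'.mul hh.dY').integrable
    -- the xx-term, via swapping
    have s1 : (∫ p : ℝ × ℝ, dY (dY (a ∘ Prod.swap)) p * dY (h ∘ Prod.swap) p)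
        = ∫ p : ℝ × ℝ, dX (dX a) p * dX h p := by
      conv_lhs => rw [← integral2_swap
        (fun p : ℝ × ℝ => dY (dY (a ∘ Prod.swap)) p * dY (h ∘ Prod.swap) p)]
      exact integral_congr_ae (Filter.Eventually.of_forall fun p => rfl)
    have c2 : (∫ p : ℝ × ℝ, dX (dX a) p * dX h p)
        = -∫ p : ℝ × ℝ, dX (dX (dX a)) p * h p := by
      rw [← s1, key1_y ha' hh']
      congr 1
      conv_lhs => rw [← integral2_swap
        (fun p : ℝ × ℝ => dY (dY (dY (a ∘ Prod.swap))) p * (h ∘ Prod.swap) p)]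
      exact integral_congr_ae (Filter.Eventually.of_forall fun p => rfl)
    have c3 : (∫ p : ℝ × ℝ, dY (dY a) p * dY h p)
        = -∫ p : ℝ × ℝ, dY (dY (dY a)) p * h p := key1_y ha hh
    -- the H₂ variation
    have c4 : J2a + J2b = (∫ p : ℝ × ℝ, v p * dY a p * h p)
        + ∫ p : ℝ × ℝ, v₁ p * a p * h p := by
      rw [hJ2a, hJ2b, key_y ha hb hh]
      congr 1
      · exact integral_congr_ae (Filter.Eventually.of_forall fun p => by simp only [hv])
      · exact integral_congr_ae (Filter.Eventually.of_forall fun p => by simp only [hv₁])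
    -- the H₃ variation, via swapping
    have c5 : J3a + J3b = (∫ p : ℝ × ℝ, w p * dX a p * h p)
        + ∫ p : ℝ × ℝ, w₁ p * a p * h p := by
      rw [hJ3a, hJ3b, key_y ha' hb' hh']
      congr 1
      · calc (∫ p : ℝ × ℝ, 3 * pinvX (dY fun q => (a ∘ Prod.swap) q * (b ∘ Prod.swap) q) p
              * dY (a ∘ Prod.swap) p * (h ∘ Prod.swap) p)
            = ∫ p : ℝ × ℝ, (fun q : ℝ × ℝ =>
                3 * pinvY (dX fun q' => a q' * b q') q * dX a q * h q) p.swap :=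
              integral_congr_ae (Filter.Eventually.of_forall fun p => rfl)
          _ = ∫ p : ℝ × ℝ, 3 * pinvY (dX fun q' => a q' * b q') p * dX a p * h p :=
              integral2_swap
                (fun q : ℝ × ℝ => 3 * pinvY (dX fun q' => a q' * b q') q * dX a q * h q)
          _ = ∫ p : ℝ × ℝ, w p * dX a p * h p :=
              integral_congr_ae (Filter.Eventually.of_forall fun p => by simp only [hw])
      · calc (∫ p : ℝ × ℝ, 3 * pinvX (dY fun q => dY (a ∘ Prod.swap) q * (b ∘ Prod.swap) q) p
              * (a ∘ Prod.swap) p * (h ∘ Prod.swap) p)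
            = ∫ p : ℝ × ℝ, (fun q : ℝ × ℝ =>
                3 * pinvY (dX fun q' => dX a q' * b q') q * a q * h q) p.swap :=
              integral_congr_ae (Filter.Eventually.of_forall fun p => rfl)
          _ = ∫ p : ℝ × ℝ, 3 * pinvY (dX fun q' => dX a q' * b q') p * a p * h p :=
              integral2_swap
                (fun q : ℝ × ℝ => 3 * pinvY (dX fun q' => dX a q' * b q') q * a q * h q)
          _ = ∫ p : ℝ × ℝ, w₁ p * a p * h p :=
              integral_congr_ae (Filter.Eventually.of_forall fun p => by simp only [hw₁])
    -- splitting the right-hand side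
    have i1 : Integrable fun p : ℝ × ℝ => dX (dX (dX a)) p * h p :=
      (ha.dX'.dX'.dX'.mul hh).integrable
    have i2 : Integrable fun p : ℝ × ℝ => dY (dY (dY a)) p * h p :=
      (ha.dY'.dY'.dY'.mul hh).integrable
    have i3 : Integrable fun p : ℝ × ℝ => v p * dY a p * h p :=
      (((hvc.mul (dY_contDiff ha.smooth).continuous).mul hh.cont)).integrable_of_hasCompactSupport
        hh.supp.mul_left
    have i4 : Integrable fun p : ℝ × ℝ => w p * dX a p * h p :=
      (((hwc.mul (dX_contDiff ha.smooth).continuous).mul hh.cont)).integrable_of_hasCompactSupport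
        hh.supp.mul_left
    have i5 : Integrable fun p : ℝ × ℝ => v₁ p * a p * h p :=
      (((hv₁c.mul ha.cont).mul hh.cont)).integrable_of_hasCompactSupport hh.supp.mul_left
    have i6 : Integrable fun p : ℝ × ℝ => w₁ p * a p * h p :=
      (((hw₁c.mul ha.cont).mul hh.cont)).integrable_of_hasCompactSupport hh.supp.mul_left
    have i12 : Integrable fun p : ℝ × ℝ => dX (dX (dX a)) p * h p + dY (dY (dY a)) p * h p :=
      i1.add i2
    have i56 : Integrable fun p : ℝ × ℝ => v₁ p * a p * h p + w₁ p * a p * h p := i5.add i6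
    have i456 : Integrable fun p : ℝ × ℝ => w p * dX a p * h p
        + (v₁ p * a p * h p + w₁ p * a p * h p) := i4.add i56
    have i3456 : Integrable fun p : ℝ × ℝ => v p * dY a p * h p
        + (w p * dX a p * h p + (v₁ p * a p * h p + w₁ p * a p * h p)) := i3.add i456
    have c6 : (∫ p : ℝ × ℝ, T p * h p)
        = ((∫ p : ℝ × ℝ, dX (dX (dX a)) p * h p) + ∫ p : ℝ × ℝ, dY (dY (dY a)) p * h p)
          - ((∫ p : ℝ × ℝ, v p * dY a p * h p)
            + ((∫ p : ℝ × ℝ, w p * dX a p * h p)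
              + ((∫ p : ℝ × ℝ, v₁ p * a p * h p) + ∫ p : ℝ × ℝ, w₁ p * a p * h p))) := by
      have hpt : ∀ p : ℝ × ℝ, T p * h p
          = (dX (dX (dX a)) p * h p + dY (dY (dY a)) p * h p)
            - (v p * dY a p * h p
              + (w p * dX a p * h p + (v₁ p * a p * h p + w₁ p * a p * h p))) := by
        intro p
        rw [hT p]
        ring
      rw [integral_congr_ae (Filter.Eventually.of_forall hpt),
        integral_sub i12 i3456, integral_add i1 i2, integral_add i3 i456,
        integral_add i4 i56, integral_add i5 i6]
    rw [c1, c2, c3, c4, c5, c6]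
    ring
  rw [← hfinal]
  exact main

end Auxiliary

/-- Theorem 3.1 (first Hamilton equation in weak form): if `u₁, u₂` satisfy the first
equation of system (3.1) with pseudopotentials given by (3.4), then
`∂u₁/∂t = −δH/δu₂` in the weak (variational) sense. -/
theorem mKdV_system_Hamiltonian_form
    (u₁ u₂ : ℝ → ℝ × ℝ → ℝ)
    (hu₁ : ContDiff ℝ (⊤ : ℕ∞) (fun q : ℝ × (ℝ × ℝ) => u₁ q.1 q.2))
    (hu₂ : ContDiff ℝ (⊤ : ℕ∞) (fun q : ℝ × (ℝ × ℝ) => u₂ q.1 q.2))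
    (hu₁c : ∀ t : ℝ, HasCompactSupport (u₁ t))
    (hu₂c : ∀ t : ℝ, HasCompactSupport (u₂ t))
    (v w v₁ w₁ : ℝ → ℝ × ℝ → ℝ)
    (hv : ∀ t (p : ℝ × ℝ),
      v t p = 3 * pinvX (dY (fun q => u₁ t q * u₂ t q)) p)
    (hw : ∀ t (p : ℝ × ℝ),
      w t p = 3 * pinvY (dX (fun q => u₁ t q * u₂ t q)) p)
    (hv₁ : ∀ t (p : ℝ × ℝ),
      v₁ t p = 3 * pinvX (dY (fun q => dY (u₁ t) q * u₂ t q)) p)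
    (hw₁ : ∀ t (p : ℝ × ℝ),
      w₁ t p = 3 * pinvY (dX (fun q => dX (u₁ t) q * u₂ t q)) p)
    (heq : ∀ t (p : ℝ × ℝ),
      deriv (fun τ => u₁ τ p) t
        = dX (dX (dX (u₁ t))) p + dY (dY (dY (u₁ t))) p
          - v t p * dY (u₁ t) p - w t p * dX (u₁ t) p
          - (v₁ t p + w₁ t p) * u₁ t p) :
    ∀ t : ℝ, ∀ h : ℝ × ℝ → ℝ, ContDiff ℝ (⊤ : ℕ∞) h → HasCompactSupport h →
      HasDerivAt (fun ε : ℝ => Ham (u₁ t) (fun p => u₂ t p + ε * h p))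
        (-∫ p : ℝ × ℝ, deriv (fun τ => u₁ τ p) t * h p) 0 := by
  intro t h hhs hhc
  have ha : CS (u₁ t) := ⟨by exact hu₁.comp (contDiff_const.prodMk contDiff_id), hu₁c t⟩
  have hb : CS (u₂ t) := ⟨by exact hu₂.comp (contDiff_const.prodMk contDiff_id), hu₂c t⟩
  exact main_core ha hb ⟨hhs, hhc⟩ (v t) (w t) (v₁ t) (w₁ t) (hv t) (hw t) (hv₁ t) (hw₁ t)
    (fun p => deriv (fun τ => u₁ τ p) t) (heq t)
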